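/- Fix a finite set P ⊆ R^n with P ⊆ Q^n and b ∈ Q^n, and let C^P := conv{y ∈ Z^P_+ : Σ_{p∈P} p·y(p) ∈ b + Z^n}. If C^P is nonempty, then the recession cone of C^P equals the full nonnegative orthant R^P_+. -/

import Mathlib

/-!
The recession cone of any set is a pointed cone, so it suffices to show that every unit vector
`e_j` is a recession direction of `C^P`. Clearing denominators gives `k > 0` with `k • p_j`
integral, so the set of integer points defining `C^P` is invariant under adding `k • e_j`, and a
set invariant under a translation by a positive multiple of `d` has `d` as a recession direction
of its convex hull. Conversely `C^P` lies in the orthant and is nonempty, so every recession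
direction is nonnegative.
-/

open Set

section RecessionCone

variable {E : Type*} [AddCommGroup E] [Module ℝ E]

def recessionCone (K : Set E) : PointedCone ℝ E where
  carrier := {d | ∀ x ∈ K, ∀ t : ℝ, 0 ≤ t → x + t • d ∈ K}
  zero_mem' x hx t _ := by simpa using hx
  add_mem' {d e} hd he x hx t ht := by
    simpa only [smul_add, add_assoc] using he _ (hd x hx t ht) t ht
  smul_mem' c d hd x hx t ht := by
    rw [show c • d = (c : ℝ) • d from rfl, smul_smul]
    exact hd x hx (t * c) (mul_nonneg ht c.2)

/-- For `y ∈ S` the point `y + t • d` lies on the segment from `y` to `y + N k • d ∈ S`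
once `N k ≥ t`; convexity of the preimage of the hull under translation then handles the rest
of the hull. -/
theorem mem_recessionCone_convexHull_of_add_smul_mem {S : Set E} {d : E} {k : ℝ} (hk : 0 < k)
    (hS : ∀ x ∈ S, x + k • d ∈ S) : d ∈ recessionCone (convexHull ℝ S) := by
  have hSN : ∀ N : ℕ, ∀ x ∈ S, x + (N * k) • d ∈ S := by
    intro N
    induction N with
    | zero => simp
    | succ N ih =>
      intro x hx
      simpa only [Nat.cast_succ, add_mul, one_mul, add_smul, add_assoc] using hS _ (ih x hx)
  intro x hx t ht
  suffices S ⊆ (fun y => y + t • d) ⁻¹' convexHull ℝ S from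
    convexHull_min this ((convex_convexHull ℝ S).translate_preimage_left (t • d)) hx
  intro y hy
  obtain ⟨N, hN⟩ := exists_nat_ge (t / k)
  have hM : 0 < ((N + 1 : ℕ) : ℝ) * k := by positivity
  have htM : t / (((N + 1 : ℕ) : ℝ) * k) ∈ Icc (0 : ℝ) 1 := by
    refine ⟨by positivity, (div_le_one hM).2 ?_⟩
    rw [div_le_iff₀ hk] at hN
    push_cast
    nlinarith
  have := (convex_convexHull ℝ S).add_smul_mem (subset_convexHull ℝ S hy)
    (subset_convexHull ℝ S (hSN (N + 1) y hy)) htM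
  rwa [smul_smul, div_mul_cancel₀ _ hM.ne'] at this

end RecessionCone

theorem nonneg_of_forall_nonneg_add_mul {a b : ℝ} (h : ∀ t : ℝ, 0 ≤ t → 0 ≤ a + t * b) :
    0 ≤ b := by
  by_contra! hb
  have := h ((|a| + 1) / -b) (div_nonneg (by positivity) (by linarith))
  rw [div_mul_eq_mul_div, div_neg, mul_div_cancel_right₀ _ hb.ne] at this
  linarith [le_abs_self a]

theorem recessionCone_subset_nonneg {ι : Type*} {K : Set (ι → ℝ)} (hK : K.Nonempty)
    (hK0 : K ⊆ Ici 0) : (recessionCone K : Set (ι → ℝ)) ⊆ Ici 0 := by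
  obtain ⟨x, hx⟩ := hK
  intro d hd j
  exact nonneg_of_forall_nonneg_add_mul fun t ht => hK0 (hd x hx t ht) j

theorem exists_pos_nat_mul_eq_intCast {ι : Type*} [Fintype ι] (q : ι → ℚ) :
    ∃ k : ℕ, 0 < k ∧ ∃ w : ι → ℤ, ∀ i, (k : ℚ) * q i = w i := by
  refine ⟨∏ i, (q i).den, Finset.prod_pos fun i _ => (q i).pos, ?_⟩
  have (i : ι) : ∃ z : ℤ, ((∏ i, (q i).den : ℕ) : ℚ) * q i = z := by
    obtain ⟨c, hc⟩ := Finset.dvd_prod_of_mem (fun i => (q i).den) (Finset.mem_univ i)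
    refine ⟨c * (q i).num, ?_⟩
    rw [hc]
    push_cast
    linear_combination (c : ℚ) * Rat.mul_den_eq_num (q i)
  exact ⟨fun i => (this i).choose, fun i => (this i).choose_spec⟩

section CornerPoints

def cornerPoints {n m : ℕ} (p : Fin m → Fin n → ℚ) (b : Fin n → ℚ) : Set (Fin m → ℝ) :=
  {y | ∃ yi : Fin m → ℕ, y = (fun j => (yi j : ℝ)) ∧
    ∃ z : Fin n → ℤ, (∑ j, (yi j : ℝ) • fun i => ((p j i : ℝ))) =
      (fun i => (b i : ℝ)) + fun i => (z i : ℝ)}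

variable {n m : ℕ} {p : Fin m → Fin n → ℚ} {b : Fin n → ℚ}

theorem cornerPoints_subset_nonneg : cornerPoints p b ⊆ Ici 0 := by
  rintro y ⟨yi, rfl, -⟩ j
  exact Nat.cast_nonneg _

theorem exists_add_smul_single_mem_cornerPoints (j : Fin m) :
    ∃ k : ℝ, 0 < k ∧ ∀ y ∈ cornerPoints p b, y + k • Pi.single j 1 ∈ cornerPoints p b := by
  obtain ⟨k, hk, w, hw⟩ := exists_pos_nat_mul_eq_intCast (p j)
  refine ⟨k, by exact_mod_cast hk, ?_⟩
  rintro _ ⟨yi, rfl, z, hz⟩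
  refine ⟨yi + Pi.single j k, ?_, z + w, ?_⟩
  · ext j'
    by_cases h : j' = j <;> simp [h]
  · ext i
    have hzi := congrFun hz i
    have hwi : (k : ℝ) * p j i = w i := by exact_mod_cast hw i
    simp only [Finset.sum_apply, Pi.smul_apply, smul_eq_mul, Pi.add_apply, Nat.cast_add,
      add_mul, Finset.sum_add_distrib, Int.cast_add] at hzi ⊢
    rw [hzi, Finset.sum_eq_single j (fun j' _ h => by simp [h]) (by simp), Pi.single_eq_same, hwi]
    ring

end CornerPoints

/-- For a finite set `P ⊆ ℚ^n` and `b ∈ ℚ^n`, if the corner polyhedron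
`C^P = conv{y ∈ ℤ^P₊ : ∑ p, p·y(p) ∈ b + ℤ^n}` is nonempty, then its recession
cone is the full nonnegative orthant `ℝ^P₊`. -/
theorem stmt14 (n m : ℕ) (p : Fin m → Fin n → ℚ) (b : Fin n → ℚ)
    (C : Set (Fin m → ℝ))
    (hC : C = convexHull ℝ {y : Fin m → ℝ | ∃ yi : Fin m → ℕ,
        y = (fun j => (yi j : ℝ)) ∧
        ∃ z : Fin n → ℤ, (∑ j, (yi j : ℝ) • fun i => ((p j i : ℝ))) =
          (fun i => (b i : ℝ)) + fun i => (z i : ℝ)})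
    (hne : C.Nonempty) :
    {v : Fin m → ℝ | ∀ x ∈ C, ∀ t : ℝ, 0 ≤ t → x + t • v ∈ C} =
      {v : Fin m → ℝ | ∀ j, 0 ≤ v j} := by
  change (recessionCone C : Set (Fin m → ℝ)) = Ici 0
  change C = convexHull ℝ (cornerPoints p b) at hC
  subst hC
  refine (recessionCone_subset_nonneg hne
    (convexHull_min cornerPoints_subset_nonneg (convex_Ici 0))).antisymm fun v hv => ?_
  rw [SetLike.mem_coe, ← Finset.univ_sum_single v]
  refine Submodule.sum_mem _ fun j _ => ?_
  obtain ⟨k, hk, hS⟩ := exists_add_smul_single_mem_cornerPoints (p := p) (b := b) j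
  have hvj : Pi.single j (v j) = v j • Pi.single j (1 : ℝ) := by
    rw [← Pi.single_smul', smul_eq_mul, mul_one]
  rw [hvj]
  exact Submodule.smul_mem _ ⟨v j, hv j⟩ (mem_recessionCone_convexHull_of_add_smul_mem hk hS)
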